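/- Let y ∈ ℂ⟦t⟧ be a formal power series, let S = {n ∈ ℕ : coeff n of y ≠ 0} be its support, and let d ≥ 2 be a natural number with gcd(d, gcd of S) = 1. Then: (i) for every ζ ∈ ℂ with ζ^d = 1 and ζ ≠ 1, we have rescale ζ y ≠ y, so the order of rescale ζ y − y is a (finite) natural number; and (ii) a natural number β equals the order of rescale ζ y − y for some ζ ∈ ℂ with ζ^d = 1 and ζ ≠ 1 if and only if β is a characteristic exponent of (S, d). -/

import Mathlib

/-!
The `n`-th coefficient of `y(ζt) - y` is `(ζ ^ n - 1) * aₙ`, so its order is the least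
`β ∈ S` with `ζ ^ β ≠ 1`. When `ζ ^ d = 1` and `ζ ^ n = 1` for the `n ∈ S` below `β`,
`orderOf ζ` divides `g = gcd (d, gcd {n ∈ S | n < β})`, so `g ∤ β`; conversely, if `g ∤ β`,
then `y(ζt) - y` has order exactly `β` for a primitive `g`-th root of unity `ζ`. If
`y(ζt) = y`, the same argument applied to all of `S` gives `orderOf ζ ∣ gcd (d, gcd S) = 1`.
-/

/-- The gcd of a set of natural numbers: the greatest common divisor of all its elements,
with the convention that the gcd of a set of which every element is `0` (e.g. the empty
set) is `0`. -/
noncomputable def setGcd (S : Set ℕ) : ℕ :=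
  sSup {g : ℕ | ∀ n ∈ S, g ∣ n}

/-- `β` is a characteristic exponent of `(S, d)` if `β ∈ S` and
`gcd(d, gcd {n ∈ S | n < β})` does not divide `β` (where the gcd of the empty set is `0`,
so that `gcd (d, 0) = d`). -/
def IsCharExponent (S : Set ℕ) (d β : ℕ) : Prop :=
  β ∈ S ∧ ¬ Nat.gcd d (setGcd {n ∈ S | n < β}) ∣ β

section setGcd

variable {S : Set ℕ}

lemma bddAbove_setOf_forall_dvd {m : ℕ} (hm : m ∈ S) (hm0 : m ≠ 0) :
    BddAbove {g : ℕ | ∀ n ∈ S, g ∣ n} :=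
  ⟨m, fun _ hg => Nat.le_of_dvd (Nat.pos_of_ne_zero hm0) (hg m hm)⟩

lemma setGcd_eq_zero_of_forall_eq_zero (h : ∀ n ∈ S, n = 0) : setGcd S = 0 := by
  have : {g : ℕ | ∀ n ∈ S, g ∣ n} = Set.univ :=
    Set.eq_univ_of_forall fun g n hn => h n hn ▸ dvd_zero g
  rw [setGcd, this, Set.Infinite.Nat.sSup_eq_zero Set.infinite_univ]

lemma setGcd_dvd {n : ℕ} (hn : n ∈ S) : setGcd S ∣ n := by
  by_cases hz : ∀ m ∈ S, m = 0
  · simp [hz n hn]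
  push Not at hz
  obtain ⟨m, hm, hm0⟩ := hz
  have : setGcd S ∈ {g : ℕ | ∀ n ∈ S, g ∣ n} :=
    Nat.sSup_mem ⟨1, fun _ _ => one_dvd _⟩ (bddAbove_setOf_forall_dvd hm hm0)
  exact this n hn

-- `lcm g (setGcd S)` is again a common divisor, hence at most `setGcd S`.
lemma dvd_setGcd {g : ℕ} (h : ∀ n ∈ S, g ∣ n) : g ∣ setGcd S := by
  by_cases hz : ∀ m ∈ S, m = 0
  · rw [setGcd_eq_zero_of_forall_eq_zero hz]
    exact dvd_zero g
  push Not at hz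
  obtain ⟨m, hm, hm0⟩ := hz
  have hlcm : ∀ n ∈ S, Nat.lcm g (setGcd S) ∣ n :=
    fun n hn => Nat.lcm_dvd (h n hn) (setGcd_dvd hn)
  have hlcm_pos : 0 < Nat.lcm g (setGcd S) :=
    Nat.pos_of_dvd_of_pos (hlcm m hm) (Nat.pos_of_ne_zero hm0)
  have hlcm_eq : Nat.lcm g (setGcd S) = setGcd S :=
    le_antisymm (le_csSup (bddAbove_setOf_forall_dvd hm hm0) hlcm)
      (Nat.le_of_dvd hlcm_pos (Nat.dvd_lcm_right _ _))
  exact hlcm_eq ▸ Nat.dvd_lcm_left _ _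

end setGcd

lemma orderOf_dvd_gcd_setGcd {G : Type*} [Monoid G] {ζ : G} {d : ℕ} {T : Set ℕ}
    (hd : ζ ^ d = 1) (hT : ∀ n ∈ T, ζ ^ n = 1) : orderOf ζ ∣ Nat.gcd d (setGcd T) :=
  Nat.dvd_gcd (orderOf_dvd_of_pow_eq_one hd)
    (dvd_setGcd fun n hn => orderOf_dvd_of_pow_eq_one (hT n hn))

namespace PowerSeries

variable {R : Type*} [CommRing R] {ζ : R} {y : PowerSeries R}

lemma coeff_rescale_sub_self (n : ℕ) :
    coeff n (rescale ζ y - y) = (ζ ^ n - 1) * coeff n y := by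
  rw [map_sub, coeff_rescale, sub_mul, one_mul]

variable [NoZeroDivisors R]

lemma coeff_rescale_sub_self_eq_zero_iff {n : ℕ} :
    coeff n (rescale ζ y - y) = 0 ↔ (coeff n y ≠ 0 → ζ ^ n = 1) := by
  rw [coeff_rescale_sub_self, mul_eq_zero, sub_eq_zero, or_iff_not_imp_right]

lemma rescale_eq_self_iff : rescale ζ y = y ↔ ∀ n, coeff n y ≠ 0 → ζ ^ n = 1 := by
  simp only [← sub_eq_zero (a := rescale ζ y), PowerSeries.ext_iff, map_zero,
    coeff_rescale_sub_self_eq_zero_iff]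

lemma order_rescale_sub_self_eq_iff {β : ℕ} :
    (rescale ζ y - y).order = β ↔
      coeff β y ≠ 0 ∧ ζ ^ β ≠ 1 ∧ ∀ n < β, coeff n y ≠ 0 → ζ ^ n = 1 := by
  simp only [order_eq_nat, Ne, coeff_rescale_sub_self_eq_zero_iff, Classical.not_imp, and_assoc]

end PowerSeries

open PowerSeries in
/-- Let `y ∈ ℂ⟦t⟧` with support `S`, and let `d ≥ 2` with `gcd (d, gcd S) = 1`.  Then for
every `d`-th root of unity `ζ ≠ 1` we have `y(ζt) ≠ y`, and the natural numbers arising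
as the order of `y(ζt) - y` for some `d`-th root of unity `ζ ≠ 1` are exactly the
characteristic exponents of `(S, d)`. -/
theorem order_rescale_sub_self_eq_charExponents (y : PowerSeries ℂ) (d : ℕ) (hd : 2 ≤ d)
    (hgcd : Nat.gcd d (setGcd {n : ℕ | PowerSeries.coeff n y ≠ 0}) = 1) :
    (∀ ζ : ℂ, ζ ^ d = 1 → ζ ≠ 1 → PowerSeries.rescale ζ y ≠ y) ∧
    (∀ β : ℕ,
      (∃ ζ : ℂ, ζ ^ d = 1 ∧ ζ ≠ 1 ∧ (PowerSeries.rescale ζ y - y).order = (β : ℕ∞)) ↔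
        IsCharExponent {n : ℕ | PowerSeries.coeff n y ≠ 0} d β) := by
  refine ⟨fun ζ hζd hζ1 hfix => hζ1 ?_, fun β => ⟨?_, ?_⟩⟩
  · have := orderOf_dvd_gcd_setGcd (T := {n | coeff n y ≠ 0}) hζd
      (rescale_eq_self_iff.1 hfix)
    rwa [hgcd, Nat.dvd_one, orderOf_eq_one_iff] at this
  · rintro ⟨ζ, hζd, -, hord⟩
    obtain ⟨hβ, hζβ, hbelow⟩ := order_rescale_sub_self_eq_iff.1 hord
    have hdvd := orderOf_dvd_gcd_setGcd (T := {n | coeff n y ≠ 0 ∧ n < β}) hζd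
      fun n hn => hbelow n hn.2 hn.1
    exact ⟨hβ, fun hβdvd => hζβ (orderOf_dvd_iff_pow_eq_one.1 (hdvd.trans hβdvd))⟩
  · rintro ⟨hβ, hndvd⟩
    set g := Nat.gcd d (setGcd {n | coeff n y ≠ 0 ∧ n < β})
    have hg0 : g ≠ 0 := Nat.gcd_ne_zero_left (by omega)
    have hg1 : g ≠ 1 := fun h => hndvd (show g ∣ β by rw [h]; exact one_dvd β)
    have hprim := Complex.isPrimitiveRoot_exp g hg0
    have hbelow : ∀ n < β, coeff n y ≠ 0 → g ∣ n := fun n hn hn0 =>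
      (Nat.gcd_dvd_right _ _).trans (setGcd_dvd ⟨hn0, hn⟩)
    refine ⟨_, (hprim.pow_eq_one_iff_dvd d).2 (Nat.gcd_dvd_left _ _), hprim.ne_one (by omega),
      order_rescale_sub_self_eq_iff.2 ⟨hβ, mt (hprim.pow_eq_one_iff_dvd β).1 hndvd,
        fun n hn hn0 => (hprim.pow_eq_one_iff_dvd n).2 (hbelow n hn hn0)⟩⟩
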